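/- arXiv:2007.03418 — 6 statements merged into one kernel-verified Lean document; each statement's English description precedes it below -/
import Mathlib

section
/- Suppose V_i ≠ 0 for every i. Then the real 2n×2n matrix J is singular (det J = 0) if and only if the complex 2n×2n matrix Y′ is singular (det Y′ = 0). -/
/-!
`J` is the real matrix, in the coordinates `(Re x, Im x)`, of the `ℝ`-linear map
`x ↦ -i (W x + Z̄ x̄)`. In the coordinates `(x, x̄)` the same map has the complex matrix
`[[-i W, -i Z̄], [i Z, i W̄]]`, so the two determinants agree. Since `|e^{iθ}| = 1` we have
`D̄ Y₂ T D̄ = Z`, and the complex matrix factors as `diag(-i D, i D̄) · Y′ · diag(D̄, D)`,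
whose outer factors are invertible once every `V i ≠ 0`.
-/

open Matrix Complex ComplexConjugate

namespace Matrix

variable {m : Type*}

/-- The real matrix, in the coordinates `(Re x, Im x)`, of the `ℝ`-linear map
`x ↦ A x + B x̄`. -/
def realification (A B : Matrix m m ℂ) : Matrix (m ⊕ m) (m ⊕ m) ℝ :=
  fromBlocks (A.map re + B.map re) (-A.map im + B.map im) (A.map im + B.map im)
    (A.map re - B.map re)

/-- The matrix of `x ↦ A x + B x̄` acting on pairs `(x, x̄)`. -/
def conjBlocks (A B : Matrix m m ℂ) : Matrix (m ⊕ m) (m ⊕ m) ℂ :=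
  fromBlocks A B (B.map conj) (A.map conj)

variable [Fintype m]

theorem conjBlocks_mul (A B C D : Matrix m m ℂ) :
    conjBlocks A B * conjBlocks C D =
      conjBlocks (A * C + B * D.map conj) (A * D + B * C.map conj) := by
  simp [conjBlocks, fromBlocks_multiply, Matrix.map_mul, Matrix.map_add, Matrix.map_map,
    Function.comp_def, add_comm]

variable [DecidableEq m]

theorem det_map_conj (A : Matrix m m ℂ) : (A.map conj).det = conj A.det :=
  (RingHom.map_det _ A).symm

theorem det_conjBlocks_zero (A : Matrix m m ℂ) :
    (conjBlocks A 0).det = A.det * conj A.det := by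
  rw [conjBlocks, Matrix.map_zero _ (map_zero _), det_fromBlocks_zero₂₁, det_map_conj]

theorem det_conjBlocks_zero_ne_zero {A : Matrix m m ℂ} (hA : A.det ≠ 0) :
    (conjBlocks A 0).det ≠ 0 := by
  simpa [det_conjBlocks_zero] using hA

/-- The change of coordinates `(Re x, Im x) ↦ (x, x̄)`. -/
def conjCoords : Matrix (m ⊕ m) (m ⊕ m) ℂ :=
  fromBlocks 1 (I • 1) 1 (-I • 1)

theorem conjCoords_mul_realification (A B : Matrix m m ℂ) :
    conjCoords * (realification A B).map ofReal = conjBlocks A B * conjCoords := by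
  simp only [conjCoords, realification, conjBlocks, fromBlocks_map, fromBlocks_multiply,
    fromBlocks_inj]
  refine ⟨?_, ?_, ?_, ?_⟩ <;> ext i j <;> apply Complex.ext <;>
    simp [Matrix.add_apply, Matrix.sub_apply, Matrix.smul_apply] <;> ring

theorem det_conjCoords_ne_zero : (conjCoords : Matrix (m ⊕ m) (m ⊕ m) ℂ).det ≠ 0 := by
  rw [conjCoords, det_fromBlocks_one₁₁, Matrix.one_mul, ← sub_smul, det_smul, det_one,
    mul_one]
  exact pow_ne_zero _ (by simp [sub_eq_zero, Complex.ext_iff]; norm_num)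

theorem ofReal_det_realification (A B : Matrix m m ℂ) :
    ((realification A B).det : ℂ) = (conjBlocks A B).det := by
  have h := congrArg det (conjCoords_mul_realification A B)
  rw [det_mul, det_mul, mul_comm] at h
  rw [← ofRealHom_eq_coe, RingHom.map_det]
  exact mul_right_cancel₀ det_conjCoords_ne_zero h

end Matrix

theorem conj_sq_mul_exp_two_mul_I (v θ : ℝ) :
    conj ((v : ℂ) * exp (I * θ)) ^ 2 * exp (2 * I * θ) = (v : ℂ) ^ 2 := by
  have h : exp (-I * θ) * exp (-I * θ) * exp (2 * I * θ) = 1 := by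
    rw [← exp_add, ← exp_add, ← exp_zero]
    ring_nf
  rw [map_mul, conj_ofReal, ← exp_conj, map_mul, conj_I, conj_ofReal]
  linear_combination (v : ℂ) ^ 2 * h

theorem conj_diagonal_mul_mul_conj_diagonal {m : Type*} [Fintype m] [DecidableEq m]
    (y : m → ℂ) (V θ : m → ℝ) :
    (diagonal fun i => (V i : ℂ) * exp (I * θ i)).map conj *
        (diagonal y * diagonal fun i => exp (2 * I * θ i)) *
        (diagonal fun i => (V i : ℂ) * exp (I * θ i)).map conj =
      diagonal fun i => y i * (V i : ℂ) ^ 2 := by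
  simp only [diagonal_map (map_zero _), diagonal_mul_diagonal]
  congr 1
  funext i
  linear_combination y i * conj_sq_mul_exp_two_mul_I (V i) (θ i)

/- Lemma 1: with all voltage magnitudes nonzero, the real algebraic Jacobian `J`
is singular iff the complex block matrix `Y′` is singular. -/
theorem impasse_jacobian_singular_iff_Yprime_singular_general
    (n : ℕ)
    (Y₁ Y₂ : Matrix (Fin n) (Fin n) ℂ) (hY₂diag : Y₂.IsDiag)
    (θ V : Fin n → ℝ) (hV : ∀ i, V i ≠ 0)
    (D W Z : Matrix (Fin n) (Fin n) ℂ)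
    (hD : D = Matrix.diagonal fun i => (V i : ℂ) * Complex.exp (Complex.I * (θ i : ℂ)))
    (hW : W = D * Y₁.map (starRingEnd ℂ) * D.map (starRingEnd ℂ))
    (hZ : Z = Matrix.diagonal fun i => Y₂ i i * (V i : ℂ) ^ 2)
    (E F M N : Matrix (Fin n) (Fin n) ℝ)
    (hE : E = fun i j => (W i j).im - (Z i j).im)
    (hF : F = fun i j => (W i j).re - (Z i j).re)
    (hM : M = fun i j => -(W i j).re - (Z i j).re)
    (hN : N = fun i j => (W i j).im + (Z i j).im)
    (J : Matrix (Fin n ⊕ Fin n) (Fin n ⊕ Fin n) ℝ)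
    (hJ : J = Matrix.fromBlocks E F M N)
    (T : Matrix (Fin n) (Fin n) ℂ)
    (hT : T = Matrix.diagonal fun i => Complex.exp (2 * Complex.I * (θ i : ℂ)))
    (Y' : Matrix (Fin n ⊕ Fin n) (Fin n ⊕ Fin n) ℂ)
    (hY' : Y' = Matrix.fromBlocks (Y₁.map (starRingEnd ℂ)) ((Y₂ * T).map (starRingEnd ℂ))
      (Y₂ * T) Y₁) :
    J.det = 0 ↔ Y'.det = 0 := by
  have hZ_sandwich : D.map conj * (Y₂ * T) * D.map conj = Z := by
    have h := conj_diagonal_mul_mul_conj_diagonal Y₂.diag V θ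
    rw [hY₂diag.diagonal_diag] at h
    rw [hD, hT, hZ]
    exact h
  have hJ_realification : J = realification (-I • W) (-I • Z.map conj) := by
    rw [hJ, realification]
    congr 1 <;> ext i j <;> simp [hE, hF, hM, hN, sub_eq_add_neg]
  have hY'_conjBlocks : Y' = conjBlocks (Y₁.map conj) ((Y₂ * T).map conj) := by
    simp [hY', conjBlocks, Matrix.map_map, Function.comp_def]
  have hfactor : conjBlocks (-I • W) (-I • Z.map conj) =
      conjBlocks (-I • D) 0 * Y' * conjBlocks (D.map conj) 0 := by
    rw [hY'_conjBlocks, conjBlocks_mul, conjBlocks_mul, hW, ← hZ_sandwich]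
    simp [Matrix.map_mul, Matrix.map_map, Function.comp_def, Matrix.mul_assoc]
  have hD0 : D.det ≠ 0 := by
    simp [hD, det_diagonal, Finset.prod_ne_zero_iff, hV]
  have hL : (conjBlocks (-I • D) 0).det ≠ 0 :=
    det_conjBlocks_zero_ne_zero (by rw [det_smul]; exact mul_ne_zero (by simp) hD0)
  have hR : (conjBlocks (D.map conj) 0).det ≠ 0 :=
    det_conjBlocks_zero_ne_zero (by rw [det_map_conj]; exact (map_ne_zero _).mpr hD0)
  rw [← ofReal_eq_zero, hJ_realification, ofReal_det_realification, hfactor, det_mul, det_mul]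
  simp only [mul_eq_zero, hL, hR, false_or, or_false]

theorem impasse_jacobian_singular_iff_Yprime_singular
    (n : ℕ) (hn : 1 ≤ n)
    (Y₁ Y₂ : Matrix (Fin n) (Fin n) ℂ) (hY₂diag : Y₂.IsDiag)
    (θ V : Fin n → ℝ) (hV : ∀ i, V i ≠ 0)
    (D W Z : Matrix (Fin n) (Fin n) ℂ)
    (hD : D = Matrix.diagonal fun i => (V i : ℂ) * Complex.exp (Complex.I * (θ i : ℂ)))
    (hW : W = D * Y₁.map (starRingEnd ℂ) * D.map (starRingEnd ℂ))
    (hZ : Z = Matrix.diagonal fun i => Y₂ i i * (V i : ℂ) ^ 2)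
    (E F M N : Matrix (Fin n) (Fin n) ℝ)
    (hE : E = fun i j => (W i j).im - (Z i j).im)
    (hF : F = fun i j => (W i j).re - (Z i j).re)
    (hM : M = fun i j => -(W i j).re - (Z i j).re)
    (hN : N = fun i j => (W i j).im + (Z i j).im)
    (J : Matrix (Fin n ⊕ Fin n) (Fin n ⊕ Fin n) ℝ)
    (hJ : J = Matrix.fromBlocks E F M N)
    (T : Matrix (Fin n) (Fin n) ℂ)
    (hT : T = Matrix.diagonal fun i => Complex.exp (2 * Complex.I * (θ i : ℂ)))
    (Y' : Matrix (Fin n ⊕ Fin n) (Fin n ⊕ Fin n) ℂ)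
    (hY' : Y' = Matrix.fromBlocks (Y₁.map (starRingEnd ℂ)) ((Y₂ * T).map (starRingEnd ℂ))
      (Y₂ * T) Y₁) :
    J.det = 0 ↔ Y'.det = 0 :=
  impasse_jacobian_singular_iff_Yprime_singular_general n Y₁ Y₂ hY₂diag θ V hV D W Z hD hW hZ E F M
    N hE hF hM hN J hJ T hT Y' hY'
end

section
/- Suppose V_i ≠ 0 for every i. If det J = 0 (i.e., the system state lies on the impasse surface), then there exists a nonzero vector x ∈ ℂⁿ such that ‖Y₁·x‖ ≤ m·‖x‖, where m = max_{1≤i≤n} |(Y₂)_{ii}|. (Equivalently, the minimum singular value of Y₁ is at most the maximum modulus of the diagonal entries of Y₂, which is Theorem 1 of the paper: a trajectory can hit the impasse surface only if σ_min(Y₁) ≤ max_i |(1−α_i/2)Gᵢ + i(1−β_i/2)Bᵢ|.) -/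
/-!
Let `w = (u, v)` be a nonzero kernel vector of `J` and put `c = v - i u`. The two block rows
of `J w = 0` are the real and imaginary parts of the single complex equation `W c = conj (Z c)`.
Since `W = D conj(Y₁) conj(D)`, the left side is `D conj(Y₁ x)` for `x = D conj(c)`, while
`Z = diag(Y₂ᵢᵢ Vᵢ²)` with `|Vᵢ| = |Dᵢᵢ|`. Comparing moduli entrywise and cancelling `|Dᵢᵢ| ≠ 0`
gives `|(Y₁ x)ᵢ| = |(Y₂)ᵢᵢ| |xᵢ|` for every `i`, whence the norm bound.
-/

/-- The Euclidean norm on `ℂⁿ`. -/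
noncomputable def euclNorm {k : ℕ} (v : Fin k → ℂ) : ℝ :=
  Real.sqrt (∑ i, ‖v i‖ ^ 2)

open Matrix ComplexConjugate

section RealJacobian

variable {ι : Type*}

def realJacobian (W Z : Matrix ι ι ℂ) : Matrix (ι ⊕ ι) (ι ⊕ ι) ℝ :=
  fromBlocks (of fun i j => (W i j).im - (Z i j).im) (of fun i j => (W i j).re - (Z i j).re)
    (of fun i j => -(W i j).re - (Z i j).re) (of fun i j => (W i j).im + (Z i j).im)

def toComplex (w : ι ⊕ ι → ℝ) : ι → ℂ := fun k => ⟨w (.inr k), -w (.inl k)⟩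

theorem toComplex_eq_zero_iff {w : ι ⊕ ι → ℝ} : toComplex w = 0 ↔ w = 0 := by
  constructor
  · intro h
    ext (k | k)
    · simpa [toComplex] using congr_arg Complex.im (congr_fun h k)
    · simpa [toComplex] using congr_arg Complex.re (congr_fun h k)
  · rintro rfl
    funext k
    simp [toComplex, Complex.ext_iff]

variable [Fintype ι]

theorem realJacobian_mulVec (W Z : Matrix ι ι ℂ) (w : ι ⊕ ι → ℝ) :
    realJacobian W Z *ᵥ w = Sum.elim
      (fun j => ((W *ᵥ toComplex w) j - conj ((Z *ᵥ toComplex w) j)).re)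
      (fun j => ((W *ᵥ toComplex w) j - conj ((Z *ᵥ toComplex w) j)).im) := by
  ext (j | j) <;>
  simp [realJacobian, mulVec, dotProduct, toComplex, Complex.re_sum, Complex.im_sum,
    ← Finset.sum_add_distrib, ← Finset.sum_sub_distrib] <;>
  exact Finset.sum_congr rfl fun k _ => by ring

theorem exists_ne_zero_mulVec_eq_star_of_det_realJacobian_eq_zero [DecidableEq ι]
    {W Z : Matrix ι ι ℂ} (h : (realJacobian W Z).det = 0) :
    ∃ c ≠ 0, W *ᵥ c = star (Z *ᵥ c) := by
  obtain ⟨w, hw0, hw⟩ := exists_mulVec_eq_zero_iff.mpr h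
  refine ⟨toComplex w, toComplex_eq_zero_iff.not.mpr hw0, funext fun j => sub_eq_zero.mp ?_⟩
  rw [realJacobian_mulVec] at hw
  have hre := congr_fun hw (.inl j)
  have him := congr_fun hw (.inr j)
  simp only [Sum.elim_inl, Sum.elim_inr, Pi.zero_apply] at hre him
  exact Complex.ext (by simpa using hre) (by simpa using him)

end RealJacobian

section Sandwich

variable {ι : Type*} [Fintype ι] [DecidableEq ι]

theorem diagonal_mul_map_conj_mul_map_conj_mulVec {R : Type*} [CommRing R] [StarRing R]
    (d : ι → R) (Y : Matrix ι ι R) (c : ι → R) :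
    (diagonal d * Y.map (starRingEnd R) * (diagonal d).map (starRingEnd R)) *ᵥ c =
      d * star (Y *ᵥ (d * star c)) := by
  ext j
  simp [diagonal_map (map_zero _), mulVec, dotProduct, star_sum, Finset.mul_sum,
    starRingEnd_apply, mul_comm, mul_left_comm]

theorem exists_ne_zero_norm_mulVec_apply_eq {Y : Matrix ι ι ℂ} {d y z c : ι → ℂ}
    (hd : ∀ i, d i ≠ 0) (hz : ∀ i, ‖z i‖ = ‖y i‖ * ‖d i‖ ^ 2) (hc : c ≠ 0)
    (h : (diagonal d * Y.map conj * (diagonal d).map conj) *ᵥ c = star (diagonal z *ᵥ c)) :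
    ∃ x ≠ 0, ∀ i, ‖(Y *ᵥ x) i‖ = ‖y i‖ * ‖x i‖ := by
  refine ⟨d * star c, fun hx => hc ?_, fun i => ?_⟩
  · funext i
    simpa [hd i] using congr_fun hx i
  · rw [diagonal_mul_map_conj_mul_map_conj_mulVec] at h
    have hi := congr_arg norm (congr_fun h i)
    simp only [Pi.mul_apply, Pi.star_apply, mulVec_diagonal, norm_mul, norm_star, hz] at hi ⊢
    apply mul_left_cancel₀ (norm_ne_zero_iff.mpr (hd i))
    linear_combination hi

end Sandwich

theorem euclNorm_le_mul_of_forall_norm_le {k : ℕ} {u x : Fin k → ℂ} {m : ℝ} (hm : 0 ≤ m)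
    (h : ∀ i, ‖u i‖ ≤ m * ‖x i‖) : euclNorm u ≤ m * euclNorm x := by
  rw [euclNorm, euclNorm, ← Real.sqrt_sq hm, ← Real.sqrt_mul (sq_nonneg m), Finset.mul_sum]
  gcongr with i
  simpa [mul_pow] using pow_le_pow_left₀ (norm_nonneg _) (h i) 2

theorem impasse_necessary_condition_general
    (n : ℕ) (hn : 1 ≤ n)
    (Y₁ Y₂ : Matrix (Fin n) (Fin n) ℂ)
    (θ V : Fin n → ℝ) (hV : ∀ i, V i ≠ 0)
    (D W Z : Matrix (Fin n) (Fin n) ℂ)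
    (hD : D = Matrix.diagonal fun i => (V i : ℂ) * Complex.exp (Complex.I * (θ i : ℂ)))
    (hW : W = D * Y₁.map (starRingEnd ℂ) * D.map (starRingEnd ℂ))
    (hZ : Z = Matrix.diagonal fun i => Y₂ i i * (V i : ℂ) ^ 2)
    (E F M N : Matrix (Fin n) (Fin n) ℝ)
    (hE : E = fun i j => (W i j).im - (Z i j).im)
    (hF : F = fun i j => (W i j).re - (Z i j).re)
    (hM : M = fun i j => -(W i j).re - (Z i j).re)
    (hN : N = fun i j => (W i j).im + (Z i j).im)
    (J : Matrix (Fin n ⊕ Fin n) (Fin n ⊕ Fin n) ℝ)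
    (hJ : J = Matrix.fromBlocks E F M N)
    (hsing : J.det = 0) :
    ∃ x : Fin n → ℂ, x ≠ 0 ∧
      euclNorm (Y₁.mulVec x) ≤
        (Finset.univ.sup' ⟨⟨0, hn⟩, Finset.mem_univ _⟩ fun i => ‖Y₂ i i‖) *
          euclNorm x := by
  subst hE hF hM hN hJ
  obtain ⟨c, hc0, hc⟩ := exists_ne_zero_mulVec_eq_star_of_det_realJacobian_eq_zero hsing
  have hd (i : Fin n) : (V i : ℂ) * Complex.exp (Complex.I * (θ i : ℂ)) ≠ 0 :=
    mul_ne_zero (Complex.ofReal_ne_zero.mpr (hV i)) (Complex.exp_ne_zero _)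
  subst hD hW hZ
  obtain ⟨x, hx0, hx⟩ := exists_ne_zero_norm_mulVec_apply_eq (y := fun i => Y₂ i i) hd
    (fun i => by simp) hc0 hc
  have hle (i : Fin n) := Finset.le_sup' (fun i => ‖Y₂ i i‖) (Finset.mem_univ i)
  exact ⟨x, hx0, euclNorm_le_mul_of_forall_norm_le ((norm_nonneg _).trans (hle ⟨0, hn⟩))
    fun i => (hx i).trans_le (mul_le_mul_of_nonneg_right (hle i) (norm_nonneg _))⟩

theorem impasse_necessary_condition
    (n : ℕ) (hn : 1 ≤ n)
    (Y₁ Y₂ : Matrix (Fin n) (Fin n) ℂ) (hY₂diag : Y₂.IsDiag)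
    (θ V : Fin n → ℝ) (hV : ∀ i, V i ≠ 0)
    (D W Z : Matrix (Fin n) (Fin n) ℂ)
    (hD : D = Matrix.diagonal fun i => (V i : ℂ) * Complex.exp (Complex.I * (θ i : ℂ)))
    (hW : W = D * Y₁.map (starRingEnd ℂ) * D.map (starRingEnd ℂ))
    (hZ : Z = Matrix.diagonal fun i => Y₂ i i * (V i : ℂ) ^ 2)
    (E F M N : Matrix (Fin n) (Fin n) ℝ)
    (hE : E = fun i j => (W i j).im - (Z i j).im)
    (hF : F = fun i j => (W i j).re - (Z i j).re)
    (hM : M = fun i j => -(W i j).re - (Z i j).re)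
    (hN : N = fun i j => (W i j).im + (Z i j).im)
    (J : Matrix (Fin n ⊕ Fin n) (Fin n ⊕ Fin n) ℝ)
    (hJ : J = Matrix.fromBlocks E F M N)
    (hsing : J.det = 0) :
    ∃ x : Fin n → ℂ, x ≠ 0 ∧
      euclNorm (Y₁.mulVec x) ≤
        (Finset.univ.sup' ⟨⟨0, hn⟩, Finset.mem_univ _⟩ fun i => ‖Y₂ i i‖) *
          euclNorm x :=
  impasse_necessary_condition_general n hn Y₁ Y₂ θ V hV D W Z hD hW hZ E F M N hE hF hM hN J hJ
    hsing
end

section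
/- Suppose there exists a real constant c such that |(Y₂)_{ii}| < c for every i and ‖Y₁·x‖ ≥ c·‖x‖ for every x ∈ ℂⁿ. Then the complex 2n×2n block matrix Y′ = [[conj(Y₁), conj(Y₂·T)], [Y₂·T, Y₁]] is nonsingular (det Y′ ≠ 0). -/
/-!
Write a kernel vector of `Y′` as `(x, y)` and `D := Y₂ T`, a diagonal matrix whose entries have
modulus `|(Y₂)ᵢᵢ| < c`, so `‖D w‖ < c ‖w‖` for `w ≠ 0`. The second block row gives
`Y₁ y = -D x`, the conjugate of the first gives `Y₁ x̄ = -D ȳ`, hence `c ‖y‖ ≤ ‖D x‖` and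
`c ‖x‖ ≤ ‖D ȳ‖`. Chaining these through `‖D w‖ ≤ c ‖w‖`, strict at whichever of `x`, `y`
is nonzero, is a contradiction.
-/

open Matrix

section euclNorm

variable {k : ℕ}

theorem euclNorm_nonneg (v : Fin k → ℂ) : 0 ≤ euclNorm v :=
  Real.sqrt_nonneg _

@[simp]
theorem euclNorm_zero : euclNorm (0 : Fin k → ℂ) = 0 := by
  simp [euclNorm]

@[simp]
theorem euclNorm_neg (v : Fin k → ℂ) : euclNorm (-v) = euclNorm v := by
  simp [euclNorm]

@[simp]
theorem euclNorm_star (v : Fin k → ℂ) : euclNorm (star v) = euclNorm v := by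
  simp [euclNorm]

theorem euclNorm_diagonal_mulVec_lt {d : Fin k → ℂ} {c : ℝ} (hd : ∀ i, ‖d i‖ < c)
    {w : Fin k → ℂ} (hw : w ≠ 0) : euclNorm (diagonal d *ᵥ w) < c * euclNorm w := by
  obtain ⟨j, hj⟩ := Function.ne_iff.mp hw
  have hc : 0 < c := (norm_nonneg _).trans_lt (hd j)
  have hsq : ∑ i, ‖d i * w i‖ ^ 2 < c ^ 2 * ∑ i, ‖w i‖ ^ 2 := by
    rw [Finset.mul_sum]
    refine Finset.sum_lt_sum (fun i _ => ?_) ⟨j, Finset.mem_univ j, ?_⟩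
    · rw [norm_mul, mul_pow]
      gcongr
      exact (hd i).le
    · rw [norm_mul, mul_pow]
      have : 0 < ‖w j‖ := norm_pos_iff.mpr hj
      gcongr
      exact hd j
  simp only [euclNorm, mulVec_diagonal]
  calc √(∑ i, ‖d i * w i‖ ^ 2) < √(c ^ 2 * ∑ i, ‖w i‖ ^ 2) :=
        Real.sqrt_lt_sqrt (by positivity) hsq
    _ = c * √(∑ i, ‖w i‖ ^ 2) := by rw [Real.sqrt_mul' _ (by positivity), Real.sqrt_sq hc.le]

end euclNorm

theorem star_map_conj_mulVec {k : ℕ} (A : Matrix (Fin k) (Fin k) ℂ) (v : Fin k → ℂ) :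
    star (A.map (starRingEnd ℂ) *ᵥ v) = A *ᵥ star v := by
  ext i
  simp [mulVec, dotProduct]

theorem mul_euclNorm_le_of_add_mulVec_eq_zero {k : ℕ} {A B : Matrix (Fin k) (Fin k) ℂ} {c : ℝ}
    (hA : ∀ x : Fin k → ℂ, c * euclNorm x ≤ euclNorm (A *ᵥ x)) {x y : Fin k → ℂ}
    (h : B *ᵥ x + A *ᵥ y = 0) : c * euclNorm y ≤ euclNorm (B *ᵥ x) := by
  simpa [eq_neg_of_add_eq_zero_right h] using hA y

theorem det_fromBlocks_map_conj_ne_zero {k : ℕ} {A B : Matrix (Fin k) (Fin k) ℂ} {c : ℝ}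
    (hA : ∀ x : Fin k → ℂ, c * euclNorm x ≤ euclNorm (A *ᵥ x))
    (hB : ∀ w : Fin k → ℂ, w ≠ 0 → euclNorm (B *ᵥ w) < c * euclNorm w) :
    (fromBlocks (A.map (starRingEnd ℂ)) (B.map (starRingEnd ℂ)) B A).det ≠ 0 := by
  have hB_le (w : Fin k → ℂ) : euclNorm (B *ᵥ w) ≤ c * euclNorm w := by
    rcases eq_or_ne w 0 with rfl | hw
    · simp
    · exact (hB w hw).le
  intro hdet
  obtain ⟨v, hv0, hv⟩ := exists_mulVec_eq_zero_iff.mpr hdet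
  set x := v ∘ Sum.inl
  set y := v ∘ Sum.inr
  rw [fromBlocks_mulVec] at hv
  have h₁ : B *ᵥ star y + A *ᵥ star x = 0 := by
    simpa [add_comm, star_map_conj_mulVec] using congrArg (fun u => star (u ∘ Sum.inl)) hv
  have h₂ : B *ᵥ x + A *ᵥ y = 0 := congrArg (· ∘ Sum.inr) hv
  have hx : c * euclNorm x ≤ euclNorm (B *ᵥ star y) := by
    simpa using mul_euclNorm_le_of_add_mulVec_eq_zero hA h₁
  have hy : c * euclNorm y ≤ euclNorm (B *ᵥ x) := mul_euclNorm_le_of_add_mulVec_eq_zero hA h₂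
  rcases eq_or_ne x 0 with hx0 | hx0
  · have hy0 : y ≠ 0 := fun hy0 => hv0 <| funext fun
      | .inl i => congrFun hx0 i
      | .inr i => congrFun hy0 i
    have hBy := hB y hy0
    simp only [hx0, mulVec_zero, euclNorm_zero] at hy
    linarith [euclNorm_nonneg (B *ᵥ y)]
  · have hBx := hB x hx0
    have hBy := hB_le (star y)
    rw [euclNorm_star] at hBy
    linarith

theorem Yprime_nonsingular_of_sigma_min_gt_general
    (n : ℕ)
    (Y₁ Y₂ : Matrix (Fin n) (Fin n) ℂ) (hY₂diag : Y₂.IsDiag)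
    (θ : Fin n → ℝ)
    (c : ℝ)
    (hc : ∀ i, ‖Y₂ i i‖ < c)
    (hY₁ : ∀ x : Fin n → ℂ, c * euclNorm x ≤ euclNorm (Y₁.mulVec x))
    (T : Matrix (Fin n) (Fin n) ℂ)
    (hT : T = Matrix.diagonal fun i => Complex.exp (2 * Complex.I * (θ i : ℂ)))
    (Y' : Matrix (Fin n ⊕ Fin n) (Fin n ⊕ Fin n) ℂ)
    (hY' : Y' = Matrix.fromBlocks (Y₁.map (starRingEnd ℂ)) ((Y₂ * T).map (starRingEnd ℂ))
      (Y₂ * T) Y₁) :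
    Y'.det ≠ 0 := by
  set d := fun i => Y₂ i i * Complex.exp (2 * Complex.I * (θ i : ℂ))
  have hYT : Y₂ * T = diagonal d := by
    rw [hT, ← hY₂diag.diagonal_diag, diagonal_mul_diagonal]
    rfl
  have hd (i : Fin n) : ‖d i‖ < c := by
    have : 2 * Complex.I * (θ i : ℂ) = Complex.I * ((2 * θ i : ℝ) : ℂ) := by push_cast; ring
    rw [norm_mul, this, Complex.norm_exp_I_mul_ofReal, mul_one]
    exact hc i
  rw [hY', hYT]
  exact det_fromBlocks_map_conj_ne_zero hY₁ fun w => euclNorm_diagonal_mulVec_lt hd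

theorem Yprime_nonsingular_of_sigma_min_gt
    (n : ℕ) (hn : 1 ≤ n)
    (Y₁ Y₂ : Matrix (Fin n) (Fin n) ℂ) (hY₂diag : Y₂.IsDiag)
    (θ : Fin n → ℝ)
    (c : ℝ)
    (hc : ∀ i, ‖Y₂ i i‖ < c)
    (hY₁ : ∀ x : Fin n → ℂ, c * euclNorm x ≤ euclNorm (Y₁.mulVec x))
    (T : Matrix (Fin n) (Fin n) ℂ)
    (hT : T = Matrix.diagonal fun i => Complex.exp (2 * Complex.I * (θ i : ℂ)))
    (Y' : Matrix (Fin n ⊕ Fin n) (Fin n ⊕ Fin n) ℂ)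
    (hY' : Y' = Matrix.fromBlocks (Y₁.map (starRingEnd ℂ)) ((Y₂ * T).map (starRingEnd ℂ))
      (Y₂ * T) Y₁) :
    Y'.det ≠ 0 :=
  Yprime_nonsingular_of_sigma_min_gt_general n Y₁ Y₂ hY₂diag θ c hc hY₁ T hT Y' hY'
end

section
/- For every θ : {1,…,n} → ℝ, writing T = diag(exp(2i·θ_i)), the complex 2n×2n block matrix Y′ = [[conj(Y₁), conj(Y₂·T)], [Y₂·T, Y₁]] is nonsingular (det Y′ ≠ 0). -/
/-!
If `Y' (u, w) = 0`, then `x = w + conj u` and `x = w - conj u` solve `Y₁ x = ∓ D conj x`, where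
`D = Y₂ T` is diagonal. Write `Y₁ = i B + diag a`. For such an `x`, the imaginary part of
`x* Y₁ x` is `-E(x)/2 + ∑ Im aᵢ |xᵢ|²`, with `E(x) = ∑ Bᵢⱼ |xᵢ - xⱼ|²` the Dirichlet energy of
the network, while that of `x* D conj x` is at least `-∑ |Dᵢ| |xᵢ|²`. Since `β ≥ 1` gives
`|Dᵢ| ≤ -βᵢ bᵢ / 2`, the reactive loads cancel and `E(x) ≤ 2 ∑ hᵢ |xᵢ|² ≤ 0`. Hence `x` vanishes
at the generator buses and is constant along the edges of the connected network, so `x = 0`.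
-/

open Complex Finset Matrix

variable {ι : Type*} [Fintype ι]

lemma forall_of_exists_cut_edge {r : ι → ι → Prop}
    (hconn : ∀ S : Finset ι, S.Nonempty → S ≠ univ → ∃ i ∈ S, ∃ j ∉ S, r i j)
    {p : ι → Prop} (hp : ∀ i j, r i j → p i → p j) {i₀ : ι} (hi₀ : p i₀) (i : ι) : p i := by
  classical
  by_contra hi
  obtain ⟨j, hj, k, hk, hjk⟩ := hconn (univ.filter p) ⟨i₀, by simpa using hi₀⟩
    (fun h => hi (mem_filter.mp (h.symm ▸ mem_univ i : i ∈ univ.filter p)).2)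
  simp only [mem_filter, mem_univ, true_and] at hj hk
  exact hk (hp j k hjk hj)

def dirichletEnergy (B : Matrix ι ι ℝ) (x : ι → ℂ) : ℝ :=
  ∑ i, ∑ j, B i j * normSq (x i - x j)

section Laplacian

variable {B : Matrix ι ι ℝ}

lemma sum_row_eq_zero_of_diag [DecidableEq ι] (hdiag : ∀ i, B i i = -∑ j ∈ univ.erase i, B i j)
    (i : ι) : ∑ j, B i j = 0 := by
  rw [← add_sum_erase _ _ (mem_univ i), hdiag, neg_add_cancel]

omit [Fintype ι] in
lemma mul_normSq_sub_nonneg (hoff : ∀ i j, i ≠ j → 0 ≤ B i j) (x : ι → ℂ) (i j : ι) :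
    0 ≤ B i j * normSq (x i - x j) := by
  by_cases hij : i = j
  · simp [hij]
  · exact mul_nonneg (hoff i j hij) (normSq_nonneg _)

lemma dirichletEnergy_nonneg (hoff : ∀ i j, i ≠ j → 0 ≤ B i j) (x : ι → ℂ) :
    0 ≤ dirichletEnergy B x :=
  sum_nonneg fun i _ => sum_nonneg fun j _ => mul_normSq_sub_nonneg hoff x i j

lemma eq_of_dirichletEnergy_nonpos (hoff : ∀ i j, i ≠ j → 0 ≤ B i j) {x : ι → ℂ}
    (hE : dirichletEnergy B x ≤ 0) {i j : ι} (hij : 0 < B i j) : x i = x j := by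
  have hterm : B i j * normSq (x i - x j) ≤ dirichletEnergy B x :=
    (single_le_sum (fun j _ => mul_normSq_sub_nonneg hoff x i j) (mem_univ j)).trans
      (single_le_sum (fun i _ => sum_nonneg fun j _ => mul_normSq_sub_nonneg hoff x i j)
        (mem_univ i))
  have : normSq (x i - x j) ≤ 0 := by nlinarith [normSq_nonneg (x i - x j)]
  exact sub_eq_zero.mp (normSq_eq_zero.mp (this.antisymm (normSq_nonneg _)))

lemma star_dotProduct_mulVec_eq_dirichletEnergy (hB : B.IsSymm) (hrow : ∀ i, ∑ j, B i j = 0)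
    (x : ι → ℂ) : star x ⬝ᵥ (B.map (↑) *ᵥ x) = ((-dirichletEnergy B x / 2 : ℝ) : ℂ) := by
  set f : ι → ι → ℂ := fun i j => B i j * (star (x i) * (x i - x j))
  have hf : ∑ i, ∑ j, f i j = -(star x ⬝ᵥ (B.map (↑) *ᵥ x)) := by
    simp only [f, dotProduct, mulVec, map_apply, ← sum_neg_distrib]
    refine sum_congr rfl fun i _ => ?_
    have : ∑ j, (B i j : ℂ) = 0 := by exact_mod_cast hrow i
    simp only [mul_sub, mul_left_comm _ (star (x i)), sum_sub_distrib, ← mul_sum, ← sum_mul, this]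
    simp
  have hE : (dirichletEnergy B x : ℂ) = ∑ i, ∑ j, (f i j + f j i) := by
    simp only [dirichletEnergy, ofReal_sum, ofReal_mul, ← mul_conj]
    refine sum_congr rfl fun i _ => sum_congr rfl fun j _ => ?_
    simp only [f, hB.apply i j, map_sub, Complex.star_def]
    ring
  simp only [sum_add_distrib] at hE
  rw [sum_comm (f := fun i j => f j i), hf] at hE
  push_cast
  linear_combination hE / 2

lemma dirichletEnergy_le_of_mulVec_eq_mul_star [DecidableEq ι] (hB : B.IsSymm)
    (hrow : ∀ i, ∑ j, B i j = 0) {a d x : ι → ℂ}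
    (hx : (I • B.map (↑) + diagonal a) *ᵥ x = d * star x) :
    dirichletEnergy B x / 2 ≤ ∑ i, ((a i).im + ‖d i‖) * normSq (x i) := by
  have hlhs : (star x ⬝ᵥ ((I • B.map (↑) + diagonal a) *ᵥ x)).im
      = -dirichletEnergy B x / 2 + ∑ i, (a i).im * normSq (x i) := by
    rw [add_mulVec, smul_mulVec, dotProduct_add, dotProduct_smul,
      star_dotProduct_mulVec_eq_dirichletEnergy hB hrow]
    simp [dotProduct, mulVec_diagonal, im_sum]
    exact sum_congr rfl fun i _ => by rw [normSq_apply]; ring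
  have hrhs : ∀ i, -(‖d i‖ * normSq (x i)) ≤ (star (x i) * (d i * star (x i))).im := by
    intro i
    have hnorm : ‖star (x i) * (d i * star (x i))‖ = ‖d i‖ * normSq (x i) := by
      simp [normSq_eq_norm_sq]; ring
    have := abs_im_le_norm (star (x i) * (d i * star (x i)))
    rw [hnorm] at this
    exact (abs_le.mp this).1
  rw [hx] at hlhs
  have := sum_le_sum fun i (_ : i ∈ univ) => hrhs i
  simp only [dotProduct, Pi.mul_apply, Pi.star_apply, im_sum] at hlhs
  rw [sum_neg_distrib] at this
  simp only [add_mul, sum_add_distrib]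
  linarith

theorem eq_zero_of_mulVec_eq_mul_star [DecidableEq ι] (hB : B.IsSymm)
    (hoff : ∀ i j, i ≠ j → 0 ≤ B i j) (hrow : ∀ i, ∑ j, B i j = 0)
    (hconn : ∀ S : Finset ι, S.Nonempty → S ≠ univ → ∃ i ∈ S, ∃ j ∉ S, 0 < B i j)
    {a d : ι → ℂ} (hdiss : ∀ i, (a i).im + ‖d i‖ ≤ 0) {i₀ : ι} (hi₀ : (a i₀).im + ‖d i₀‖ < 0)
    {x : ι → ℂ} (hx : (I • B.map (↑) + diagonal a) *ᵥ x = d * star x) : x = 0 := by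
  have hle := dirichletEnergy_le_of_mulVec_eq_mul_star hB hrow hx
  have hE := dirichletEnergy_nonneg hoff x
  have hterm : ∀ i ∈ univ, 0 ≤ -((a i).im + ‖d i‖) * normSq (x i) :=
    fun i _ => mul_nonneg (neg_nonneg.mpr (hdiss i)) (normSq_nonneg _)
  have hsum := sum_nonneg hterm
  have hi₀' := single_le_sum hterm (mem_univ i₀)
  simp only [neg_mul, sum_neg_distrib] at hsum hi₀'
  have hE0 : dirichletEnergy B x ≤ 0 := by linarith
  have hxi₀ : x i₀ = 0 := by
    rw [← normSq_eq_zero]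
    nlinarith [normSq_nonneg (x i₀)]
  funext i
  exact forall_of_exists_cut_edge hconn (p := fun i => x i = 0)
    (fun i j hij hi => eq_of_dirichletEnergy_nonpos hoff hE0 hij ▸ hi) hxi₀ i

end Laplacian

lemma star_map_starRingEnd_mulVec {R : Type*} [CommSemiring R] [StarRing R]
    (M : Matrix ι ι R) (v : ι → R) : star (M.map (starRingEnd R) *ᵥ v) = M *ᵥ star v := by
  ext i
  simp [mulVec, dotProduct, starRingEnd_apply, mul_comm]

theorem det_fromBlocks_map_conj_diagonal_ne_zero [DecidableEq ι] {Y : Matrix ι ι ℂ}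
    {δ : ι → ℂ} (hneg : ∀ x, Y *ᵥ x = -δ * star x → x = 0)
    (hpos : ∀ x, Y *ᵥ x = δ * star x → x = 0) :
    (fromBlocks (Y.map (starRingEnd ℂ)) ((diagonal δ).map (starRingEnd ℂ))
      (diagonal δ) Y).det ≠ 0 := by
  intro hdet
  obtain ⟨v, hv0, hvk⟩ := exists_mulVec_eq_zero_iff.mpr hdet
  rw [fromBlocks_mulVec, ← Sum.elim_zero_zero, Sum.elim_eq_iff] at hvk
  have hδv : ∀ z, diagonal δ *ᵥ z = δ * z := fun z => funext (mulVec_diagonal δ z)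
  set u := v ∘ Sum.inl
  set w := v ∘ Sum.inr
  have hu : Y *ᵥ star u + δ * star w = 0 := by
    simpa only [star_add, star_map_starRingEnd_mulVec, star_zero, hδv] using congrArg star hvk.1
  have hw : δ * u + Y *ᵥ w = 0 := by simpa only [hδv] using hvk.2
  have hplus : w + star u = 0 := hneg _ (by
    rw [mulVec_add, star_add, star_star]
    linear_combination hu + hw)
  have hminus : w - star u = 0 := hpos _ (by
    rw [mulVec_sub, star_sub, star_star]
    linear_combination hw - hu)
  have huw : ∀ i, star (u i) = 0 ∧ w i = 0 := fun i => by
    have hp := congrFun hplus i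
    have hm := congrFun hminus i
    simp only [Pi.add_apply, Pi.sub_apply, Pi.star_apply, Pi.zero_apply] at hp hm
    exact ⟨by linear_combination (hp - hm) / 2, by linear_combination (hp + hm) / 2⟩
  refine hv0 (funext fun k => ?_)
  rcases k with i | i
  · exact star_eq_zero.mp (huw i).1
  · exact (huw i).2

lemma norm_I_mul_mul_exp_le {β b : ℝ} (hb : b ≤ 0) (hβ : 1 ≤ β) (θ : ℝ) :
    ‖I * (((1 - β / 2) * b : ℝ) : ℂ) * exp (2 * I * θ)‖ ≤ -(β * b / 2) := by
  have hexp : ‖exp (2 * I * θ)‖ = 1 := by simp [norm_exp]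
  have h1 : |1 - β / 2| ≤ β / 2 := abs_le.mpr ⟨by linarith, by linarith⟩
  rw [norm_mul, norm_mul, norm_I, norm_real, hexp, Real.norm_eq_abs, abs_mul, abs_of_nonpos hb]
  nlinarith

theorem Yprime_never_singular_general
    (n : ℕ)
    (Vt : Finset (Fin n)) (hVt : Vt.Nonempty)
    (B : Matrix (Fin n) (Fin n) ℝ) (hBsym : B.IsSymm)
    (hBoff : ∀ i j, i ≠ j → 0 ≤ B i j)
    (hBdiag : ∀ i, B i i = -∑ j ∈ Finset.univ.erase i, B i j)
    (hBconn : ∀ S : Finset (Fin n), S.Nonempty → S ≠ Finset.univ →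
      ∃ i ∈ S, ∃ j ∉ S, 0 < B i j)
    (g h c b β : Fin n → ℝ)
    (hh : ∀ i ∈ Vt, h i < 0) (hh0 : ∀ i ∉ Vt, h i = 0)
    (hb : ∀ i, b i ≤ 0) (hβ : ∀ i, 1 ≤ β i)
    (Y₁ Y₂ : Matrix (Fin n) (Fin n) ℂ)
    (hY₁ : Y₁ = Complex.I • B.map (fun x => (x : ℂ)) +
      Matrix.diagonal (fun i => ((g i + c i : ℝ) : ℂ) +
        Complex.I * ((h i + β i * b i / 2 : ℝ) : ℂ)))
    (hY₂ : Y₂ = Matrix.diagonal (fun i => Complex.I * (((1 - β i / 2) * b i : ℝ) : ℂ)))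
    (θ : Fin n → ℝ)
    (T : Matrix (Fin n) (Fin n) ℂ)
    (hT : T = Matrix.diagonal fun i => Complex.exp (2 * Complex.I * (θ i : ℂ)))
    (Y' : Matrix (Fin n ⊕ Fin n) (Fin n ⊕ Fin n) ℂ)
    (hY' : Y' = Matrix.fromBlocks (Y₁.map (starRingEnd ℂ)) ((Y₂ * T).map (starRingEnd ℂ))
      (Y₂ * T) Y₁) :
    Y'.det ≠ 0 := by
  set δ : Fin n → ℂ := fun i => I * (((1 - β i / 2) * b i : ℝ) : ℂ) * exp (2 * I * θ i)
  have hδ : ∀ i, ‖δ i‖ ≤ -(β i * b i / 2) := fun i => norm_I_mul_mul_exp_le (hb i) (hβ i) (θ i)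
  have hh_nonpos : ∀ i, h i ≤ 0 := fun i => by
    by_cases hi : i ∈ Vt
    exacts [(hh i hi).le, (hh0 i hi).le]
  obtain ⟨i₀, hi₀⟩ := hVt
  have hker : ∀ d : Fin n → ℂ, (∀ i, ‖d i‖ = ‖δ i‖) → ∀ x, Y₁ *ᵥ x = d * star x → x = 0 := by
    intro d hd x hx
    subst hY₁
    refine eq_zero_of_mulVec_eq_mul_star hBsym hBoff (sum_row_eq_zero_of_diag hBdiag) hBconn
      (fun i => ?_) (i₀ := i₀) ?_ hx <;>
      simp only [hd, add_im, ofReal_im, mul_im, I_re, I_im, ofReal_re]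
    · linarith [hδ i, hh_nonpos i]
    · linarith [hδ i₀, hh i₀ hi₀]
  have hD : Y₂ * T = diagonal δ := by rw [hY₂, hT, diagonal_mul_diagonal]
  rw [hY', hD]
  exact det_fromBlocks_map_conj_diagonal_ne_zero (hker _ fun i => norm_neg (δ i))
    (hker δ fun _ => rfl)

theorem Yprime_never_singular
    (n : ℕ) (hn : 1 ≤ n)
    (Vt : Finset (Fin n)) (hVt : Vt.Nonempty)
    (B : Matrix (Fin n) (Fin n) ℝ) (hBsym : B.IsSymm)
    (hBoff : ∀ i j, i ≠ j → 0 ≤ B i j)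
    (hBdiag : ∀ i, B i i = -∑ j ∈ Finset.univ.erase i, B i j)
    (hBconn : ∀ S : Finset (Fin n), S.Nonempty → S ≠ Finset.univ →
      ∃ i ∈ S, ∃ j ∉ S, 0 < B i j)
    (g h c b β : Fin n → ℝ)
    (hg : ∀ i, 0 ≤ g i) (hg0 : ∀ i ∉ Vt, g i = 0)
    (hh : ∀ i ∈ Vt, h i < 0) (hh0 : ∀ i ∉ Vt, h i = 0)
    (hb : ∀ i, b i ≤ 0) (hβ : ∀ i, 1 ≤ β i)
    (Y₁ Y₂ : Matrix (Fin n) (Fin n) ℂ)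
    (hY₁ : Y₁ = Complex.I • B.map (fun x => (x : ℂ)) +
      Matrix.diagonal (fun i => ((g i + c i : ℝ) : ℂ) +
        Complex.I * ((h i + β i * b i / 2 : ℝ) : ℂ)))
    (hY₂ : Y₂ = Matrix.diagonal (fun i => Complex.I * (((1 - β i / 2) * b i : ℝ) : ℂ)))
    (θ : Fin n → ℝ)
    (T : Matrix (Fin n) (Fin n) ℂ)
    (hT : T = Matrix.diagonal fun i => Complex.exp (2 * Complex.I * (θ i : ℂ)))
    (Y' : Matrix (Fin n ⊕ Fin n) (Fin n ⊕ Fin n) ℂ)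
    (hY' : Y' = Matrix.fromBlocks (Y₁.map (starRingEnd ℂ)) ((Y₂ * T).map (starRingEnd ℂ))
      (Y₂ * T) Y₁) :
    Y'.det ≠ 0 :=
  Yprime_never_singular_general n Vt hVt B hBsym hBoff hBdiag hBconn g h c b β hh hh0 hb hβ Y₁ Y₂
    hY₁ hY₂ θ T hT Y' hY'
end

section
/- Let A be an N×N complex matrix such that every row is weakly diagonally dominant, i.e., Σ_{j≠i} |A_ij| ≤ |A_ii| for every i. Let S = { i : Σ_{j≠i} |A_ij| < |A_ii| } be the set of strictly diagonally dominant rows, and suppose that for every index i ∉ S there exists a finite sequence i = k₀, k₁, …, k_r with A_{k_{l−1} k_l} ≠ 0 for each l = 1, …, r and k_r ∈ S. Then A is nonsingular (det A ≠ 0). -/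
/-! Take a nonzero `x` with `A *ᵥ x = 0` and an index `i` where `‖x i‖` is maximal. Row `i` of
`A *ᵥ x = 0` and weak dominance force
`‖A i i‖ * ‖x i‖ ≤ ∑_{j ≠ i} ‖A i j‖ * ‖x j‖ ≤ ‖A i i‖ * ‖x i‖`, so row `i` is not strictly
dominant, and every `j` with `A i j ≠ 0` is again of maximal modulus.
Following the walk from `i` therefore stays among the maximal indices and ends in a strictly
dominant row, which is impossible. -/

open Finset

theorem prop_last_of_chain {α : Type*} {R : α → α → Prop} {P : α → Prop}
    (hP : ∀ a b, P a → R a b → P b) {k : ℕ → α} {r : ℕ}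
    (hk : ∀ l < r, R (k l) (k (l + 1))) (h0 : P (k 0)) : P (k r) := by
  induction r with
  | zero => exact h0
  | succ r ih =>
    exact hP _ _ (ih fun l hl => hk l (hl.trans r.lt_succ_self)) (hk r r.lt_succ_self)

namespace Matrix

variable {ι 𝕜 : Type*} [Fintype ι] [DecidableEq ι] [NormedField 𝕜]
  {A : Matrix ι ι 𝕜} {x : ι → 𝕜}

theorem norm_diag_mul_le_of_mulVec_apply_eq_zero {i : ι} (hx : (A *ᵥ x) i = 0) :
    ‖A i i‖ * ‖x i‖ ≤ ∑ j ∈ univ.erase i, ‖A i j‖ * ‖x j‖ := calc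
  ‖A i i‖ * ‖x i‖ = ‖∑ j ∈ univ.erase i, A i j * x j‖ := by
    rw [← norm_mul, ← norm_neg, ← eq_neg_iff_add_eq_zero.mpr]
    rwa [sum_erase_add _ (fun j => A i j * x j) (mem_univ i)]
  _ ≤ ∑ j ∈ univ.erase i, ‖A i j‖ * ‖x j‖ := by
    simpa only [norm_mul] using norm_sum_le (univ.erase i) fun j => A i j * x j

variable {i : ι} (hx : (A *ᵥ x) i = 0) (hmax : ∀ j, ‖x j‖ ≤ ‖x i‖)
include hx hmax

theorem not_strictDominant_of_norm_max (hxi : x i ≠ 0) :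
    ¬ ∑ j ∈ univ.erase i, ‖A i j‖ < ‖A i i‖ := by
  refine not_lt.mpr (le_of_mul_le_mul_right ?_ (norm_pos_iff.mpr hxi))
  calc ‖A i i‖ * ‖x i‖ ≤ ∑ j ∈ univ.erase i, ‖A i j‖ * ‖x j‖ :=
        norm_diag_mul_le_of_mulVec_apply_eq_zero hx
    _ ≤ ∑ j ∈ univ.erase i, ‖A i j‖ * ‖x i‖ :=
        sum_le_sum fun j _ => mul_le_mul_of_nonneg_left (hmax j) (norm_nonneg _)
    _ = (∑ j ∈ univ.erase i, ‖A i j‖) * ‖x i‖ := (sum_mul ..).symm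

theorem norm_eq_of_norm_max (hdom : ∑ j ∈ univ.erase i, ‖A i j‖ ≤ ‖A i i‖) {j : ι}
    (hij : A i j ≠ 0) : ‖x j‖ = ‖x i‖ := by
  by_contra hne
  have hlt : ‖x j‖ < ‖x i‖ := (hmax j).lt_of_ne hne
  have hji : j ≠ i := by rintro rfl; exact hne rfl
  have hsum_lt : ∑ k ∈ univ.erase i, ‖A i k‖ * ‖x k‖ < ‖A i i‖ * ‖x i‖ := calc
    _ < ∑ k ∈ univ.erase i, ‖A i k‖ * ‖x i‖ :=
        sum_lt_sum (fun k _ => mul_le_mul_of_nonneg_left (hmax k) (norm_nonneg _))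
          ⟨j, mem_erase.mpr ⟨hji, mem_univ j⟩,
            mul_lt_mul_of_pos_left hlt (norm_pos_iff.mpr hij)⟩
    _ = (∑ k ∈ univ.erase i, ‖A i k‖) * ‖x i‖ := (sum_mul ..).symm
    _ ≤ ‖A i i‖ * ‖x i‖ := mul_le_mul_of_nonneg_right hdom (norm_nonneg _)
  exact hsum_lt.not_ge (norm_diag_mul_le_of_mulVec_apply_eq_zero hx)

end Matrix

theorem wcdd_nonsingular
    (N : ℕ) (A : Matrix (Fin N) (Fin N) ℂ)
    (hdom : ∀ i, ∑ j ∈ Finset.univ.erase i, ‖A i j‖ ≤ ‖A i i‖)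
    (S : Set (Fin N))
    (hS : S = {i | ∑ j ∈ Finset.univ.erase i, ‖A i j‖ < ‖A i i‖})
    (hchain : ∀ i ∉ S, ∃ (r : ℕ) (k : ℕ → Fin N), k 0 = i ∧
      (∀ l < r, A (k l) (k (l + 1)) ≠ 0) ∧ k r ∈ S) :
    A.det ≠ 0 := by
  intro hdet
  obtain ⟨x, hx0, hAx⟩ := Matrix.exists_mulVec_eq_zero_iff.mpr hdet
  obtain ⟨j, hj⟩ := Function.ne_iff.mp hx0
  have : Nonempty (Fin N) := ⟨j⟩
  obtain ⟨i₀, hi₀⟩ := Finite.exists_max fun i => ‖x i‖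
  have hpos : 0 < ‖x i₀‖ := (norm_pos_iff.mpr hj).trans_le (hi₀ j)
  have not_mem_S : ∀ i, ‖x i‖ = ‖x i₀‖ → i ∉ S := fun i hi => by
    rw [hS]
    exact Matrix.not_strictDominant_of_norm_max (congrFun hAx i) (hi ▸ hi₀)
      (norm_pos_iff.mp (hi ▸ hpos))
  have max_closed : ∀ i j, ‖x i‖ = ‖x i₀‖ → A i j ≠ 0 → ‖x j‖ = ‖x i₀‖ :=
    fun i j hi hij =>
      (Matrix.norm_eq_of_norm_max (congrFun hAx i) (hi ▸ hi₀) (hdom i) hij).trans hi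
  obtain ⟨r, k, hk0, hkA, hkS⟩ := hchain i₀ (not_mem_S i₀ rfl)
  exact not_mem_S (k r) (prop_last_of_chain max_closed hkA (by rw [hk0])) hkS
end

section
/- Let S, g, h, c, b, β be real numbers with S ≥ 0, g ≥ 0, h < 0, b ≤ 0 and β ≥ 1. Then |(c + g) + i·(−S + h + β·b/2)| > S + |1 − β/2|·|b|, where |·| on the left is the modulus of a complex number. -/
/-! The modulus of the diagonal entry is at least that of its imaginary part, which is at least
`S - h + (β/2)|b|`; this exceeds `S + |1 - β/2| |b|` because `-h > 0` and `|1 - β/2| ≤ β/2`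
for `β ≥ 1`. -/

lemma abs_one_sub_half_le_half {β : ℝ} (hβ : 1 ≤ β) : |1 - β / 2| ≤ β / 2 :=
  abs_le.mpr ⟨by linarith, by linarith⟩

lemma Complex.abs_le_norm_ofReal_add_I_mul_ofReal (x y : ℝ) : |y| ≤ ‖(x : ℂ) + I * y‖ := by
  simpa using abs_im_le_norm ((x : ℂ) + I * y)

theorem generator_row_strictly_dominant_general
    (S g h c b β : ℝ) (hh : h < 0)
    (hb : b ≤ 0) (hβ : 1 ≤ β) :
    S + |1 - β / 2| * |b| <
      ‖((c + g : ℝ) : ℂ) + Complex.I * ((-S + h + β * b / 2 : ℝ) : ℂ)‖ := by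
  have load_bound : |1 - β / 2| * |b| ≤ β / 2 * -b := by
    rw [abs_of_nonpos hb]
    exact mul_le_mul_of_nonneg_right (abs_one_sub_half_le_half hβ) (neg_nonneg.mpr hb)
  calc S + |1 - β / 2| * |b| < -(-S + h + β * b / 2) := by linarith
    _ ≤ |-S + h + β * b / 2| := neg_le_abs _
    _ ≤ _ := Complex.abs_le_norm_ofReal_add_I_mul_ofReal _ _

theorem generator_row_strictly_dominant
    (S g h c b β : ℝ) (hS : 0 ≤ S) (hg : 0 ≤ g) (hh : h < 0)
    (hb : b ≤ 0) (hβ : 1 ≤ β) :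
    S + |1 - β / 2| * |b| <
      ‖((c + g : ℝ) : ℂ) + Complex.I * ((-S + h + β * b / 2 : ℝ) : ℂ)‖ :=
  generator_row_strictly_dominant_general S g h c b β hh hb hβ
end
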